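/- For π-reversible P and any orbit partition with Gibbs kernel G, the squared weighted Frobenius norm satisfies ‖GP − Π‖²_{F,π} = Tr(GP²) − 1 = Tr(P̄²‾) − 1. -/
import Mathlib


open Finset Matrix

namespace GpgStmt

noncomputable section

variable {X : Type*}

/-- Matrix with all rows equal to π. -/
def Pimat {X : Type*} (π : X → ℝ) : Matrix X X ℝ := Matrix.of fun _ y => π y

def IsStochastic [Fintype X] (P : Matrix X X ℝ) : Prop :=
  (∀ x y, 0 ≤ P x y) ∧ ∀ x, ∑ y, P x y = 1

/-- π-stationary transition matrix. -/
def IsStationary [Fintype X] (π : X → ℝ) (P : Matrix X X ℝ) : Prop :=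
  IsStochastic P ∧ ∀ y, ∑ x, π x * P x y = π y

/-- π-reversible transition matrix. -/
def IsReversible [Fintype X] (π : X → ℝ) (P : Matrix X X ℝ) : Prop :=
  IsStochastic P ∧ ∀ x y, π x * P x y = π y * P y x

/-- mass of the orbit O_i = {x | o x = i}. -/
def orbMass [Fintype X] {k : ℕ} (π : X → ℝ) (o : X → Fin k) (i : Fin k) : ℝ :=
  ∑ x ∈ Finset.filter (fun x => o x = i) Finset.univ, π x

/-- Gibbs kernel of the orbit partition induced by o. -/
def gibbs [Fintype X] {k : ℕ} (π : X → ℝ) (o : X → Fin k) : Matrix X X ℝ :=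
  Matrix.of fun x y => if o x = o y then π y / orbMass π o (o x) else 0

/-- Projection chain P̄ of P with respect to the orbit partition induced by o. -/
def projChain [Fintype X] {k : ℕ} (π : X → ℝ) (o : X → Fin k) (P : Matrix X X ℝ) :
    Matrix (Fin k) (Fin k) ℝ :=
  Matrix.of fun i j => (1 / orbMass π o i) *
    ∑ x ∈ Finset.filter (fun x => o x = i) Finset.univ,
      ∑ y ∈ Finset.filter (fun y => o y = j) Finset.univ, π x * P x y

/-- π-weighted KL divergence between transition matrices, with 0·log(0/a) = 0. -/
def klDiv {X : Type*} [Fintype X] (π : X → ℝ) (Q R : Matrix X X ℝ) : ℝ :=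
  ∑ x, ∑ y, π x * Q x y * Real.log (Q x y / R x y)

/-- ℓ²(π)-adjoint of a matrix. -/
def piAdj [Fintype X] (π : X → ℝ) (M : Matrix X X ℝ) : Matrix X X ℝ :=
  Matrix.of fun x y => π y * M y x / π x

/-- squared π-weighted Frobenius norm ‖M‖²_{F,π} = Tr(M*M). -/
def frobSq [Fintype X] (π : X → ℝ) (M : Matrix X X ℝ) : ℝ :=
  Matrix.trace (piAdj π M * M)

/-- π-mass of a finite set. -/
def mass [Fintype X] (π : X → ℝ) (S : Finset X) : ℝ := ∑ x ∈ S, π x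

/-- Two-block Gibbs kernel G_S for the partition X = S ⊔ Sᶜ. -/
def gibbsTwo [Fintype X] [DecidableEq X] (π : X → ℝ) (S : Finset X) : Matrix X X ℝ :=
  Matrix.of fun x y =>
    if x ∈ S then (if y ∈ S then π y / mass π S else 0)
    else (if y ∈ S then 0 else π y / mass π Sᶜ)

/-- g(S) = (1/(π(S)π(S'))) Σ_{x∈S,y∈S'} π(x) P²(x,y). -/
def gfun [Fintype X] [DecidableEq X] (π : X → ℝ) (P : Matrix X X ℝ) (S : Finset X) : ℝ :=
  (1 / (mass π S * mass π Sᶜ)) * ∑ x ∈ S, ∑ y ∈ Sᶜ, π x * (P * P) x y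

/-- h(S) = (1/π(S)) Σ_{x∈S,y∈S'} π(x) P²(x,y). -/
def hfun [Fintype X] [DecidableEq X] (π : X → ℝ) (P : Matrix X X ℝ) (S : Finset X) : ℝ :=
  (1 / mass π S) * ∑ x ∈ S, ∑ y ∈ Sᶜ, π x * (P * P) x y

/-- Ergodicity (primitivity): some power of P has all entries positive. -/
def IsErgodic [Fintype X] [DecidableEq X] (P : Matrix X X ℝ) : Prop :=
  ∃ m : ℕ, ∀ x y, 0 < (P ^ m) x y

/-- Shannon entropy of π. -/
def shannonEnt [Fintype X] (π : X → ℝ) : ℝ := -∑ x, π x * Real.log (π x)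

/-- Entropy rate H_π(Q). -/
def entRate [Fintype X] (π : X → ℝ) (Q : Matrix X X ℝ) : ℝ :=
  -∑ x, ∑ y, π x * Q x y * Real.log (Q x y)

/-- Supermodular set function on 2^X. -/
def Supermodular {X : Type*} [DecidableEq X] (F : Finset X → ℝ) : Prop :=
  ∀ A B : Finset X, F A + F B ≤ F (A ∩ B) + F (A ∪ B)

/-- Submodular set function on 2^X. -/
def Submodular {X : Type*} [DecidableEq X] (F : Finset X → ℝ) : Prop :=
  ∀ A B : Finset X, F (A ∩ B) + F (A ∪ B) ≤ F A + F B

section Aux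
variable [Fintype X] {k : ℕ}

lemma orbMass_pos (π : X → ℝ) (o : X → Fin k) (hπ : ∀ x, 0 < π x)
    (ho : Function.Surjective o) (i : Fin k) : 0 < orbMass π o i := by
  obtain ⟨x, hx⟩ := ho i
  exact Finset.sum_pos' (fun y _ => (hπ y).le) ⟨x, by simp [hx], hπ x⟩

lemma gibbs_rowsum (π : X → ℝ) (o : X → Fin k) (hπ : ∀ x, 0 < π x)
    (ho : Function.Surjective o) (x : X) : ∑ y, gibbs π o x y = 1 := by
  have hm := (orbMass_pos π o hπ ho (o x)).ne'
  have hset : Finset.filter (fun y => o x = o y) Finset.univ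
      = Finset.filter (fun y => o y = o x) Finset.univ := by
    ext z; simp [eq_comm]
  calc ∑ y, gibbs π o x y
      = ∑ y ∈ Finset.filter (fun y => o x = o y) Finset.univ,
          π y / orbMass π o (o x) := (Finset.sum_filter _ _).symm
    _ = (∑ y ∈ Finset.filter (fun y => o y = o x) Finset.univ, π y) / orbMass π o (o x) := by
        rw [hset, Finset.sum_div]
    _ = 1 := div_self hm

lemma piAdj_mul (π : X → ℝ) (hπ : ∀ x, 0 < π x) (A B : Matrix X X ℝ) :
    piAdj π (A * B) = piAdj π B * piAdj π A := by
  ext x y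
  simp only [piAdj, Matrix.of_apply, Matrix.mul_apply]
  rw [Finset.mul_sum, Finset.sum_div]
  refine Finset.sum_congr rfl fun z _ => ?_
  have hx := (hπ x).ne'
  have hz := (hπ z).ne'
  field_simp

lemma piAdj_sub (π : X → ℝ) (A B : Matrix X X ℝ) :
    piAdj π (A - B) = piAdj π A - piAdj π B := by
  ext x y
  simp only [piAdj, Matrix.of_apply, Matrix.sub_apply]
  ring

lemma piAdj_Pimat (π : X → ℝ) (hπ : ∀ x, 0 < π x) : piAdj π (Pimat π) = Pimat π := by
  ext x y
  have hx := (hπ x).ne'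
  simp only [piAdj, Pimat, Matrix.of_apply]
  field_simp

lemma piAdj_gibbs (π : X → ℝ) (o : X → Fin k) (hπ : ∀ x, 0 < π x) :
    piAdj π (gibbs π o) = gibbs π o := by
  ext x y
  have hx := (hπ x).ne'
  simp only [piAdj, gibbs, Matrix.of_apply]
  by_cases h : o x = o y
  · rw [if_pos h.symm, if_pos h, h]
    field_simp
  · rw [if_neg (fun hh => h hh.symm), if_neg h]
    simp

lemma gibbs_idem (π : X → ℝ) (o : X → Fin k) (hπ : ∀ x, 0 < π x)
    (ho : Function.Surjective o) : gibbs π o * gibbs π o = gibbs π o := by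
  ext x y
  simp only [Matrix.mul_apply, gibbs, Matrix.of_apply]
  by_cases h : o x = o y
  · rw [if_pos h]
    have hm := (orbMass_pos π o hπ ho (o x)).ne'
    calc ∑ z, (if o x = o z then π z / orbMass π o (o x) else 0) *
            (if o z = o y then π y / orbMass π o (o z) else 0)
        = ∑ z ∈ Finset.filter (fun z => o z = o x) Finset.univ,
            π z / orbMass π o (o x) * (π y / orbMass π o (o x)) := by
          rw [Finset.sum_filter]
          refine Finset.sum_congr rfl fun z _ => ?_
          by_cases hz : o z = o x
          · rw [if_pos hz, if_pos hz.symm, if_pos (hz.trans h), hz]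
          · rw [if_neg hz, if_neg (fun hh => hz hh.symm), zero_mul]
      _ = (∑ z ∈ Finset.filter (fun z => o z = o x) Finset.univ, π z) / orbMass π o (o x)
            * (π y / orbMass π o (o x)) := by rw [← Finset.sum_mul, ← Finset.sum_div]
      _ = π y / orbMass π o (o x) := by
          rw [show (∑ z ∈ Finset.filter (fun z => o z = o x) Finset.univ, π z)
              = orbMass π o (o x) from rfl, div_self hm, one_mul]
  · rw [if_neg h]
    refine Finset.sum_eq_zero fun z _ => ?_
    by_cases hz : o x = o z
    · rw [if_neg (fun hh => h (hz.trans hh)), mul_zero]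
    · rw [if_neg hz, zero_mul]

lemma trace_mul_Pimat (π : X → ℝ) (hsum : ∑ x, π x = 1) (A : Matrix X X ℝ)
    (hA : ∀ x, ∑ y, A x y = 1) : Matrix.trace (A * Pimat π) = 1 := by
  simp only [Matrix.trace, Matrix.diag, Matrix.mul_apply, Pimat, Matrix.of_apply]
  calc ∑ x, ∑ y, A x y * π x = ∑ x, π x := by
        refine Finset.sum_congr rfl fun x _ => ?_
        rw [← Finset.sum_mul, hA x, one_mul]
    _ = 1 := hsum

lemma mul_rowsum (A B : Matrix X X ℝ) (hA : ∀ x, ∑ y, A x y = 1)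
    (hB : ∀ x, ∑ y, B x y = 1) (x : X) : ∑ y, (A * B) x y = 1 := by
  simp only [Matrix.mul_apply]
  rw [Finset.sum_comm]
  calc ∑ z, ∑ y, A x z * B z y = ∑ z, A x z := by
        refine Finset.sum_congr rfl fun z _ => ?_
        rw [← Finset.mul_sum, hB z, mul_one]
    _ = 1 := hA x

end Aux

/-- ‖GP − Π‖²_{F,π} = Tr(GP²) − 1 = Tr(projection of P²) − 1. -/
theorem stmt5 [Fintype X] [DecidableEq X] {k : ℕ} (π : X → ℝ) (o : X → Fin k)
    (hπ : ∀ x, 0 < π x) (hsum : ∑ x, π x = 1) (ho : Function.Surjective o)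
    (P : Matrix X X ℝ) (hP : IsReversible π P) :
    frobSq π (gibbs π o * P - Pimat π) = Matrix.trace (gibbs π o * P ^ 2) - 1 ∧
    Matrix.trace (gibbs π o * P ^ 2) - 1 = Matrix.trace (projChain π o (P ^ 2)) - 1 := by
  obtain ⟨⟨hPnn, hProw⟩, hrev⟩ := hP
  set G := gibbs π o with hG
  have hPadj : piAdj π P = P := by
    ext x y
    simp only [piAdj, Matrix.of_apply]
    rw [← hrev x y, mul_comm (π x), mul_div_assoc, div_self (hπ x).ne', mul_one]
  have hGrow := gibbs_rowsum π o hπ ho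
  have hPirow : ∀ x : X, ∑ y, Pimat π x y = 1 := fun x => hsum
  constructor
  · -- first equality
    have hadj : piAdj π (G * P - Pimat π) = P * G - Pimat π := by
      rw [piAdj_sub, piAdj_mul π hπ, hPadj, piAdj_Pimat π hπ, hG, piAdj_gibbs π o hπ]
    unfold frobSq
    rw [hadj, sub_mul, mul_sub, mul_sub, Matrix.trace_sub, Matrix.trace_sub, Matrix.trace_sub]
    have h1 : Matrix.trace (P * G * (G * P)) = Matrix.trace (G * P ^ 2) := by
      rw [show P * G * (G * P) = P * (G * P) by
            rw [mul_assoc, ← mul_assoc G G P, gibbs_idem π o hπ ho],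
          Matrix.trace_mul_comm, mul_assoc, ← pow_two]
    have h2 : Matrix.trace (P * G * Pimat π) = 1 :=
      trace_mul_Pimat π hsum _ (mul_rowsum P G hProw hGrow)
    have h3 : Matrix.trace (Pimat π * (G * P)) = 1 := by
      rw [Matrix.trace_mul_comm]
      exact trace_mul_Pimat π hsum _ (mul_rowsum G P hGrow hProw)
    have h4 : Matrix.trace (Pimat π * Pimat π) = 1 :=
      trace_mul_Pimat π hsum _ hPirow
    rw [h1, h2, h3, h4]
    ring
  · -- second equality
    congr 1
    set M := P ^ 2 with hM
    simp only [Matrix.trace, Matrix.diag, Matrix.mul_apply, projChain, Matrix.of_apply,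
      hG, gibbs]
    rw [← Finset.sum_fiberwise Finset.univ o
      (fun x => ∑ y, (if o x = o y then π y / orbMass π o (o x) else 0) * M y x)]
    refine Finset.sum_congr rfl fun i _ => ?_
    calc ∑ x ∈ Finset.filter (fun x => o x = i) Finset.univ,
            ∑ y, (if o x = o y then π y / orbMass π o (o x) else 0) * M y x
        = ∑ x ∈ Finset.filter (fun x => o x = i) Finset.univ,
            ∑ y ∈ Finset.filter (fun y => o y = i) Finset.univ,
              π y / orbMass π o i * M y x := by
          refine Finset.sum_congr rfl fun x hx => ?_
          have hxi : o x = i := (Finset.mem_filter.mp hx).2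
          rw [Finset.sum_filter]
          refine Finset.sum_congr rfl fun y _ => ?_
          by_cases hy : o y = i
          · rw [if_pos hy, if_pos (hxi.trans hy.symm), hxi]
          · rw [if_neg hy, if_neg (fun hh => hy (hh.symm.trans hxi)), zero_mul]
      _ = ∑ y ∈ Finset.filter (fun y => o y = i) Finset.univ,
            ∑ x ∈ Finset.filter (fun x => o x = i) Finset.univ,
              π y / orbMass π o i * M y x := Finset.sum_comm
      _ = 1 / orbMass π o i * ∑ x ∈ Finset.filter (fun x => o x = i) Finset.univ,
            ∑ y ∈ Finset.filter (fun y => o y = i) Finset.univ, π x * M x y := by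
          rw [Finset.mul_sum]
          refine Finset.sum_congr rfl fun u _ => ?_
          rw [Finset.mul_sum]
          refine Finset.sum_congr rfl fun v _ => ?_
          ring

end
end GpgStmt
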